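/- The two-dimensional subalgebras of A5 are exactly the subspaces ⟨e1, e2⟩, ⟨e1 + e3, e2⟩, ⟨e1 − e3, e2⟩, and ⟨e1, αe2 + e3⟩ for α ∈ ℂ. -/
import Mathlib


set_option linter.unreachableTactic false
set_option linter.unnecessarySeqFocus false
set_option linter.unusedTactic false

noncomputable section

/-- The underlying space of our 3-dimensional algebras. -/
abbrev V3 : Type := Fin 3 → ℂ
/-- Multiplication of `A5` (and of `S2`): unit `e1`, with `e2 * e3 = e2`,
`e3 * e2 = -e2`, `e3 * e3 = e1` and `e2 * e2 = 0`. -/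
def A5mul : V3 →ₗ[ℂ] V3 →ₗ[ℂ] V3 :=
  LinearMap.mk₂ ℂ
    (fun x y => ![x 0 * y 0 + x 2 * y 2,
                  x 0 * y 1 + x 1 * y 0 + x 1 * y 2 - x 2 * y 1,
                  x 0 * y 2 + x 2 * y 0])
    (fun x x' y => by funext k; fin_cases k <;> simp <;> ring)
    (fun a x y => by funext k; fin_cases k <;> simp <;> ring)
    (fun x y y' => by funext k; fin_cases k <;> simp <;> ring)
    (fun a x y => by funext k; fin_cases k <;> simp <;> ring)
/-- The basis vector `e1` (the unit). -/
def e1 : V3 := ![1, 0, 0]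
/-- The basis vector `e2`. -/
def e2 : V3 := ![0, 1, 0]
/-- The basis vector `e3`. -/
def e3 : V3 := ![0, 0, 1]

open Submodule Module

lemma A5_apply (x y : V3) : A5mul x y =
    ![x 0 * y 0 + x 2 * y 2,
      x 0 * y 1 + x 1 * y 0 + x 1 * y 2 - x 2 * y 1,
      x 0 * y 2 + x 2 * y 0] := rfl

lemma finrank_span_pair' {x y : V3} (h : LinearIndependent ℂ ![x, y]) :
    finrank ℂ (span ℂ ({x, y} : Set V3)) = 2 := by
  have h2 := finrank_span_eq_card h
  rw [Matrix.range_cons, Matrix.range_cons_empty, Set.singleton_union] at h2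
  simpa using h2

lemma W_eq_span {W : Submodule ℂ V3} {x y : V3} (hx : x ∈ W) (hy : y ∈ W)
    (h : LinearIndependent ℂ ![x, y]) (hr : finrank ℂ W = 2) :
    W = span ℂ ({x, y} : Set V3) := by
  have hle : span ℂ ({x, y} : Set V3) ≤ W :=
    span_le.mpr (Set.insert_subset hx (Set.singleton_subset_iff.mpr hy))
  exact (Submodule.eq_of_le_of_finrank_eq hle (by rw [finrank_span_pair' h, hr])).symm

lemma finrank_V3 : finrank ℂ V3 = 3 := by simp [finrank_fin_fun]

/-- **Theorem.** The two-dimensional subalgebras of `A5` are exactly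
`⟨e1, e2⟩`, `⟨e1 + e3, e2⟩`, `⟨e1 − e3, e2⟩`, and `⟨e1, α e2 + e3⟩` for `α ∈ ℂ`. -/
theorem two_dim_subalgebras_of_A5 (W : Submodule ℂ V3) :
    ((∀ x ∈ W, ∀ y ∈ W, A5mul x y ∈ W) ∧ Module.finrank ℂ W = 2) ↔
      (W = Submodule.span ℂ {e1, e2} ∨
        W = Submodule.span ℂ {e1 + e3, e2} ∨
        W = Submodule.span ℂ {e1 - e3, e2} ∨
        ∃ α : ℂ, W = Submodule.span ℂ {e1, α • e2 + e3}) := by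
  constructor
  · rintro ⟨hc, hr⟩
    -- find a nonzero element of `W` with vanishing third coordinate
    obtain ⟨v, hvW, hv2, hvne⟩ : ∃ v ∈ W, v 2 = 0 ∧ v ≠ 0 := by
      have hrn := LinearMap.finrank_range_add_finrank_ker
        ((LinearMap.proj 2).comp W.subtype : W →ₗ[ℂ] ℂ)
      rw [hr] at hrn
      have hrle : finrank ℂ (LinearMap.range ((LinearMap.proj 2).comp W.subtype : W →ₗ[ℂ] ℂ)) ≤ 1 := by
        simpa using Submodule.finrank_le
          (LinearMap.range ((LinearMap.proj 2).comp W.subtype : W →ₗ[ℂ] ℂ))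
      have hkpos : 0 <
          finrank ℂ (LinearMap.ker ((LinearMap.proj 2).comp W.subtype : W →ₗ[ℂ] ℂ)) := by omega
      have : Nontrivial (LinearMap.ker ((LinearMap.proj 2).comp W.subtype : W →ₗ[ℂ] ℂ)) :=
        Module.finrank_pos_iff.mp hkpos
      obtain ⟨x, hx⟩ := exists_ne (0 : LinearMap.ker ((LinearMap.proj 2).comp W.subtype : W →ₗ[ℂ] ℂ))
      refine ⟨((x : W) : V3), (x : W).2, ?_, ?_⟩
      · have hx2 := x.2
        simp only [LinearMap.mem_ker, LinearMap.comp_apply, LinearMap.proj_apply,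
          Submodule.subtype_apply] at hx2
        exact hx2
      · intro h
        exact hx (Subtype.ext (Subtype.ext h))
    by_cases hall : ∀ x ∈ W, x 2 = 0
    · left
      have ind12 : LinearIndependent ℂ ![e1, e2] :=
        LinearIndependent.pair_iff.mpr (fun s t h =>
          ⟨by simpa [e1, e2] using congrFun h 0, by simpa [e1, e2] using congrFun h 1⟩)
      refine Submodule.eq_of_le_of_finrank_eq ?_ (by rw [hr, finrank_span_pair' ind12])
      intro x hx
      refine Submodule.mem_span_pair.mpr ⟨x 0, x 1, ?_⟩
      funext k
      fin_cases k <;> simp [Matrix.vecHead, Matrix.vecTail, e1, e2, hall x hx]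
    · push_neg at hall
      obtain ⟨u0, hu0W, hu02⟩ := hall
      obtain ⟨u, hu, hu2⟩ : ∃ u ∈ W, u 2 = 1 :=
        ⟨(u0 2)⁻¹ • u0, W.smul_mem _ hu0W, by simp [inv_mul_cancel₀ hu02]⟩
      by_cases hd : v 1 = 0
      · -- here `v` is a multiple of `e1`
        have hc0 : v 0 ≠ 0 := by
          intro h
          apply hvne
          funext k
          fin_cases k <;> simp [Matrix.vecHead, Matrix.vecTail, h, hd, hv2]
        have he1 : e1 ∈ W := by
          have hveq : e1 = (v 0)⁻¹ • v := by
            funext k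
            fin_cases k <;> simp [Matrix.vecHead, Matrix.vecTail, e1, hd, hv2, inv_mul_cancel₀ hc0]
          rw [hveq]; exact W.smul_mem _ hvW
        right; right; right
        refine ⟨u 1, ?_⟩
        have hq : (u 1) • e2 + e3 ∈ W := by
          have hqe : (u 1) • e2 + e3 = u - (u 0) • e1 := by
            funext k
            fin_cases k <;> simp [Matrix.vecHead, Matrix.vecTail, e1, e2, e3, hu2]
          rw [hqe]; exact W.sub_mem hu (W.smul_mem _ he1)
        have ind : LinearIndependent ℂ ![e1, (u 1) • e2 + e3] := by
          refine LinearIndependent.pair_iff.mpr (fun s t h => ?_)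
          have ht : t = 0 := by simpa [e1, e2, e3] using congrFun h 2
          have hs : s = 0 := by simpa [e1, e2, e3, ht] using congrFun h 0
          exact ⟨hs, ht⟩
        exact W_eq_span he1 hq ind hr
      · -- here `e2 ∈ W`
        have he2 : e2 ∈ W := by
          have h := W.sub_mem (hc u hu v hvW) (hc v hvW u hu)
          have heq : A5mul u v - A5mul v u = (-(2 * v 1)) • e2 := by
            funext k
            fin_cases k <;> simp [Matrix.vecHead, Matrix.vecTail, A5_apply, e2, hu2, hv2] <;> ring
          rw [heq] at h
          have h2 := W.smul_mem (-(2 * v 1))⁻¹ h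
          rwa [smul_smul, inv_mul_cancel₀ (by simpa using hd), one_smul] at h2
        have indue2 : LinearIndependent ℂ ![u, e2] := by
          refine LinearIndependent.pair_iff.mpr (fun s t h => ?_)
          have hs : s = 0 := by simpa [e2, hu2] using congrFun h 2
          have ht : t = 0 := by simpa [e2, hs] using congrFun h 1
          exact ⟨hs, ht⟩
        -- the first coordinate of `v` must vanish
        have hc0 : v 0 = 0 := by
          by_contra hc0
          have he1 : e1 ∈ W := by
            have hveq : e1 = (v 0)⁻¹ • (v - (v 1) • e2) := by
              funext k
              fin_cases k <;> simp [Matrix.vecHead, Matrix.vecTail, e1, e2, hv2, inv_mul_cancel₀ hc0]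
            rw [hveq]; exact W.smul_mem _ (W.sub_mem hvW (W.smul_mem _ he2))
          have htop : W = ⊤ := by
            rw [eq_top_iff]
            rintro x -
            have hx : x = (x 2) • u + (x 0 - x 2 * u 0) • e1 + (x 1 - x 2 * u 1) • e2 := by
              funext k
              fin_cases k <;> simp [Matrix.vecHead, Matrix.vecTail, e1, e2, hu2] <;> ring
            rw [hx]
            exact W.add_mem (W.add_mem (W.smul_mem _ hu) (W.smul_mem _ he1)) (W.smul_mem _ he2)
          rw [htop, finrank_top, finrank_V3] at hr
          norm_num at hr
        have hW : W = span ℂ ({u, e2} : Set V3) := W_eq_span hu he2 indue2 hr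
        -- closure under squaring forces `u 0 ^ 2 = 1`
        have husq : u 0 * u 0 = 1 := by
          have h := hc u hu u hu
          rw [hW] at h
          obtain ⟨s, t, hst⟩ := Submodule.mem_span_pair.mp h
          have h2 := congrFun hst 2
          have h0 := congrFun hst 0
          simp [Matrix.vecHead, Matrix.vecTail, A5_apply, e2, hu2] at h2 h0
          linear_combination h0 - u 0 * h2
        have hfac : (u 0 - 1) * (u 0 + 1) = 0 := by linear_combination husq
        rcases mul_eq_zero.mp hfac with h1 | h1
        · have ha : u 0 = 1 := by linear_combination h1
          right; left
          have hp : e1 + e3 ∈ W := by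
            have hpe : e1 + e3 = u - (u 1) • e2 := by
              funext k
              fin_cases k <;> simp [Matrix.vecHead, Matrix.vecTail, e1, e2, e3, hu2, ha]
            rw [hpe]; exact W.sub_mem hu (W.smul_mem _ he2)
          have ind : LinearIndependent ℂ ![e1 + e3, e2] := by
            refine LinearIndependent.pair_iff.mpr (fun s t h => ?_)
            have hs : s = 0 := by simpa [e1, e2, e3] using congrFun h 0
            have ht : t = 0 := by simpa [e1, e2, e3, hs] using congrFun h 1
            exact ⟨hs, ht⟩
          exact W_eq_span hp he2 ind hr
        · have ha : u 0 = -1 := by linear_combination h1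
          right; right; left
          have hp : e1 - e3 ∈ W := by
            have hpe : e1 - e3 = (u 1) • e2 - u := by
              funext k
              fin_cases k <;> simp [Matrix.vecHead, Matrix.vecTail, e1, e2, e3, hu2, ha]
            rw [hpe]; exact W.sub_mem (W.smul_mem _ he2) hu
          have ind : LinearIndependent ℂ ![e1 - e3, e2] := by
            refine LinearIndependent.pair_iff.mpr (fun s t h => ?_)
            have hs : s = 0 := by simpa [e1, e2, e3] using congrFun h 0
            have ht : t = 0 := by simpa [e1, e2, e3, hs] using congrFun h 1
            exact ⟨hs, ht⟩
          exact W_eq_span hp he2 ind hr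
  · rintro (rfl | rfl | rfl | ⟨α, rfl⟩)
    · refine ⟨?_, ?_⟩
      · intro x hx y hy
        obtain ⟨s, t, rfl⟩ := Submodule.mem_span_pair.mp hx
        obtain ⟨s', t', rfl⟩ := Submodule.mem_span_pair.mp hy
        refine Submodule.mem_span_pair.mpr ⟨s * s', s * t' + t * s', ?_⟩
        funext k
        simp only [A5_apply]
        fin_cases k <;> simp [e1, e2] <;> ring
      · refine finrank_span_pair' ?_
        refine LinearIndependent.pair_iff.mpr (fun s t h => ?_)
        exact ⟨by simpa [e1, e2] using congrFun h 0, by simpa [e1, e2] using congrFun h 1⟩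
    · refine ⟨?_, ?_⟩
      · intro x hx y hy
        obtain ⟨s, t, rfl⟩ := Submodule.mem_span_pair.mp hx
        obtain ⟨s', t', rfl⟩ := Submodule.mem_span_pair.mp hy
        refine Submodule.mem_span_pair.mpr ⟨2 * s * s', 2 * t * s', ?_⟩
        funext k
        simp only [A5_apply]
        fin_cases k <;> simp [Matrix.vecHead, Matrix.vecTail, e1, e2, e3] <;> ring
      · refine finrank_span_pair' ?_
        refine LinearIndependent.pair_iff.mpr (fun s t h => ?_)
        have hs : s = 0 := by simpa [e1, e2, e3] using congrFun h 0
        have ht : t = 0 := by simpa [e1, e2, e3, hs] using congrFun h 1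
        exact ⟨hs, ht⟩
    · refine ⟨?_, ?_⟩
      · intro x hx y hy
        obtain ⟨s, t, rfl⟩ := Submodule.mem_span_pair.mp hx
        obtain ⟨s', t', rfl⟩ := Submodule.mem_span_pair.mp hy
        refine Submodule.mem_span_pair.mpr ⟨2 * s * s', 2 * s * t', ?_⟩
        funext k
        simp only [A5_apply]
        fin_cases k <;> simp [Matrix.vecHead, Matrix.vecTail, e1, e2, e3] <;> ring
      · refine finrank_span_pair' ?_
        refine LinearIndependent.pair_iff.mpr (fun s t h => ?_)
        have hs : s = 0 := by simpa [e1, e2, e3] using congrFun h 0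
        have ht : t = 0 := by simpa [e1, e2, e3, hs] using congrFun h 1
        exact ⟨hs, ht⟩
    · refine ⟨?_, ?_⟩
      · intro x hx y hy
        obtain ⟨s, t, rfl⟩ := Submodule.mem_span_pair.mp hx
        obtain ⟨s', t', rfl⟩ := Submodule.mem_span_pair.mp hy
        refine Submodule.mem_span_pair.mpr ⟨s * s' + t * t', s * t' + t * s', ?_⟩
        funext k
        simp only [A5_apply]
        fin_cases k <;> simp [Matrix.vecHead, Matrix.vecTail, e1, e2, e3] <;> ring
      · refine finrank_span_pair' ?_
        refine LinearIndependent.pair_iff.mpr (fun s t h => ?_)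
        have ht : t = 0 := by simpa [e1, e2, e3] using congrFun h 2
        have hs : s = 0 := by simpa [e1, e2, e3, ht] using congrFun h 0
        exact ⟨hs, ht⟩
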